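/- In the MHW swaption setting, let ξ* be the unique zero of f (which exists, with f > 0 on (−∞, ξ*)). Then f(ξ) < 0 for every ξ > ξ*, and consequently max(f(ξ), 0) = f(ξ)·𝟙_{ξ ≤ ξ*} for every ξ ∈ ℝ. -/
import Mathlib

noncomputable def mhwVol (a σ τ : ℝ) : ℝ :=
  if a = 0 then σ * τ else σ * (1 - Real.exp (-(a * τ))) / a

lemma mhwVol_zero (a σ : ℝ) : mhwVol a σ 0 = 0 := by
  unfold mhwVol
  split <;> simp

lemma mhwVol_pos {a σ τ : ℝ} (ha : 0 ≤ a) (hσ : 0 < σ) (hτ : 0 < τ) :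
    0 < mhwVol a σ τ := by
  unfold mhwVol
  split
  · positivity
  · rename_i h
    have ha' : 0 < a := lt_of_le_of_ne ha (Ne.symm h)
    have : Real.exp (-(a*τ)) < 1 := by
      rw [Real.exp_lt_one_iff]; nlinarith
    have h1 : 0 < 1 - Real.exp (-(a*τ)) := by linarith
    positivity

lemma mhwVol_mono {a σ : ℝ} (ha : 0 ≤ a) (hσ : 0 < σ) {τ₁ τ₂ : ℝ} (h : τ₁ ≤ τ₂) :
    mhwVol a σ τ₁ ≤ mhwVol a σ τ₂ := by
  unfold mhwVol
  split
  · nlinarith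
  · rename_i hne
    have ha' : 0 < a := lt_of_le_of_ne ha (Ne.symm hne)
    have : Real.exp (-(a*τ₂)) ≤ Real.exp (-(a*τ₁)) := by
      apply Real.exp_le_exp.2; nlinarith
    have h2 : σ * (1 - Real.exp (-(a*τ₁))) ≤ σ * (1 - Real.exp (-(a*τ₂))) := by nlinarith
    gcongr

set_option maxHeartbeats 1000000 in
/-- Below the unique zero `ξ*` the payoff function is positive, above it negative, so
`max (f ξ) 0 = f ξ · 𝟙_(ξ ≤ ξ*)`. -/
theorem f_indicator_form
    (a σ γ ζ : ℝ) (ha : 0 ≤ a) (hσ : 0 < σ) (hγ0 : 0 ≤ γ) (hγ1 : γ ≤ 1) (hζ : 0 < ζ)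
    (α ω α' ω' : ℕ) (hω : α + 1 ≤ ω) (hω' : α' + 2 ≤ ω')
    (t t' : ℕ → ℝ)
    (ht : ∀ j ∈ Finset.Ico α ω, t j < t (j+1))
    (ht' : ∀ ι ∈ Finset.Ico α' ω', t' ι < t' (ι+1))
    (hstart : t' α' = t α) (hend : t' ω' = t ω)
    (c B : ℕ → ℝ) (hc : ∀ j ∈ Finset.Icc (α+1) ω, 0 < c j)
    (hB : ∀ j ∈ Finset.Icc (α+1) ω, 0 < B j)
    (B' β : ℕ → ℝ) (hB' : ∀ ι ∈ Finset.Ico α' ω', 0 < B' ι) (hB'α' : B' α' = 1)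
    (hβ : ∀ ι ∈ Finset.Ico α' ω', 1 ≤ β ι)
    (ς ς' ν : ℕ → ℝ)
    (hς : ∀ j, ς j = (1 - γ) * mhwVol a σ (t j - t α))
    (hς' : ∀ ι, ς' ι = (1 - γ) * mhwVol a σ (t' ι - t α))
    (hν : ∀ ι, ν ι = mhwVol a σ (t' ι - t α) - γ * mhwVol a σ (t' (ι+1) - t α))
    (f : ℝ → ℝ)
    (hf : ∀ ξ : ℝ, f ξ =
        (∑ j ∈ Finset.Icc (α+1) ω, c j * B j * Real.exp (-(ς j) * ξ - (ς j)^2 * ζ^2 / 2))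
      + (∑ ι ∈ Finset.Ico (α'+1) ω', B' ι * Real.exp (-(ς' ι) * ξ - (ς' ι)^2 * ζ^2 / 2))
      - (∑ ι ∈ Finset.Ico α' ω', β ι * B' ι * Real.exp (-(ν ι) * ξ - (ν ι)^2 * ζ^2 / 2)))
    (ξs : ℝ) (hξs : f ξs = 0) (huniq : ∀ ξ : ℝ, f ξ = 0 → ξ = ξs)
    (hpos : ∀ ξ < ξs, 0 < f ξ) :
    (∀ ξ : ℝ, ξs < ξ → f ξ < 0)
    ∧ (∀ ξ : ℝ, max (f ξ) 0 = Set.indicator (Set.Iic ξs) f ξ) := by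
  have hγ' : (0:ℝ) ≤ 1 - γ := by linarith
  -- monotonicity of the date sequences
  have ht_mono : ∀ j, α + 1 ≤ j → j ≤ ω → t (α+1) ≤ t j := by
    intro j h1 h2
    induction j, h1 using Nat.le_induction with
    | base => exact le_refl _
    | succ n hn ih =>
      have h3 : t n < t (n+1) := ht n (by simp [Finset.mem_Ico]; omega)
      have := ih (by omega)
      linarith
  have ht'_mono : ∀ ι, α' + 1 ≤ ι → ι ≤ ω' → t' (α'+1) ≤ t' ι := by
    intro ι h1 h2
    induction ι, h1 using Nat.le_induction with
    | base => exact le_refl _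
    | succ n hn ih =>
      have h3 : t' n < t' (n+1) := ht' n (by simp [Finset.mem_Ico]; omega)
      have := ih (by omega)
      linarith
  -- base volatilities
  set vA : ℝ := mhwVol a σ (t (α+1) - t α) with hvA
  set v1 : ℝ := mhwVol a σ (t' (α'+1) - t α) with hv1
  have htA : t α < t (α+1) := ht α (by simp [Finset.mem_Ico]; omega)
  have ht1 : t α < t' (α'+1) := by
    have := ht' α' (by simp [Finset.mem_Ico]; omega)
    rw [hstart] at this; exact this
  have hvApos : 0 < vA := mhwVol_pos ha hσ (by linarith)
  have hv1pos : 0 < v1 := mhwVol_pos ha hσ (by linarith)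
  set p : ℝ := (1 - γ) * min vA v1 with hp
  set q : ℝ := γ * v1 with hq
  have hppos : 0 ≤ p := by
    apply mul_nonneg hγ'
    exact le_of_lt (lt_min hvApos hv1pos)
  have hqpos : 0 ≤ q := mul_nonneg hγ0 (le_of_lt hv1pos)
  have hpq : 0 < p + q := by
    have hmin : 0 < min vA v1 := lt_min hvApos hv1pos
    have h1 : min vA v1 ≤ v1 := min_le_right _ _
    nlinarith
  -- lower bounds for the decay rates
  have hςp : ∀ j ∈ Finset.Icc (α+1) ω, p ≤ ς j := by
    intro j hj
    simp only [Finset.mem_Icc] at hj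
    rw [hς]
    apply mul_le_mul_of_nonneg_left _ hγ'
    calc min vA v1 ≤ vA := min_le_left _ _
      _ ≤ mhwVol a σ (t j - t α) := mhwVol_mono ha hσ (by
          have := ht_mono j hj.1 hj.2; linarith)
  have hς'p : ∀ ι ∈ Finset.Ico (α'+1) ω', p ≤ ς' ι := by
    intro ι hι
    simp only [Finset.mem_Ico] at hι
    rw [hς']
    apply mul_le_mul_of_nonneg_left _ hγ'
    calc min vA v1 ≤ v1 := min_le_right _ _
      _ ≤ mhwVol a σ (t' ι - t α) := mhwVol_mono ha hσ (by
          have := ht'_mono ι hι.1 (le_of_lt hι.2); linarith)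
  -- the special negative term
  have hνα' : ν α' = -q := by
    rw [hν, hstart, sub_self, mhwVol_zero, hq, hv1]; ring
  set C : ℝ := (∑ j ∈ Finset.Icc (α+1) ω, c j * B j) + (∑ ι ∈ Finset.Ico (α'+1) ω', B' ι)
    with hC
  set Q : ℝ := β α' * Real.exp (-(q^2 * ζ^2 / 2)) with hQ
  have hα'mem : α' ∈ Finset.Ico α' ω' := by simp [Finset.mem_Ico]; omega
  have hCpos : 0 < C := by
    rw [hC]
    have h1 : 0 < ∑ j ∈ Finset.Icc (α+1) ω, c j * B j := by
      apply Finset.sum_pos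
      · intro j hj; exact mul_pos (hc j hj) (hB j hj)
      · exact ⟨α+1, by simp [Finset.mem_Icc]; omega⟩
    have h2 : 0 ≤ ∑ ι ∈ Finset.Ico (α'+1) ω', B' ι := by
      apply Finset.sum_nonneg
      intro ι hι
      simp only [Finset.mem_Ico] at hι
      exact le_of_lt (hB' ι (by simp [Finset.mem_Ico]; omega))
    linarith
  have hQpos : 0 < Q := by
    rw [hQ]
    have := hβ α' hα'mem
    positivity
  -- key upper bound for f on nonnegative ξ
  have key : ∀ ξ : ℝ, 0 ≤ ξ → f ξ ≤ C * Real.exp (-p * ξ) - Q * Real.exp (q * ξ) := by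
    intro ξ hξ
    rw [hf]
    have b1 : (∑ j ∈ Finset.Icc (α+1) ω, c j * B j * Real.exp (-(ς j) * ξ - (ς j)^2 * ζ^2 / 2))
        ≤ (∑ j ∈ Finset.Icc (α+1) ω, c j * B j) * Real.exp (-p * ξ) := by
      rw [Finset.sum_mul]
      apply Finset.sum_le_sum
      intro j hj
      have hcb : 0 ≤ c j * B j := le_of_lt (mul_pos (hc j hj) (hB j hj))
      apply mul_le_mul_of_nonneg_left _ hcb
      apply Real.exp_le_exp.2
      have h1 : p ≤ ς j := hςp j hj
      have h2 : 0 ≤ (ς j)^2 * ζ^2 / 2 := by positivity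
      nlinarith
    have b2 : (∑ ι ∈ Finset.Ico (α'+1) ω', B' ι * Real.exp (-(ς' ι) * ξ - (ς' ι)^2 * ζ^2 / 2))
        ≤ (∑ ι ∈ Finset.Ico (α'+1) ω', B' ι) * Real.exp (-p * ξ) := by
      rw [Finset.sum_mul]
      apply Finset.sum_le_sum
      intro ι hι
      have hmem : ι ∈ Finset.Ico α' ω' := by
        simp only [Finset.mem_Ico] at hι ⊢; omega
      have hb : 0 ≤ B' ι := le_of_lt (hB' ι hmem)
      apply mul_le_mul_of_nonneg_left _ hb
      apply Real.exp_le_exp.2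
      have h1 : p ≤ ς' ι := hς'p ι hι
      have h2 : 0 ≤ (ς' ι)^2 * ζ^2 / 2 := by positivity
      nlinarith
    have b3 : Q * Real.exp (q * ξ)
        ≤ ∑ ι ∈ Finset.Ico α' ω', β ι * B' ι * Real.exp (-(ν ι) * ξ - (ν ι)^2 * ζ^2 / 2) := by
      have hterm : β α' * B' α' * Real.exp (-(ν α') * ξ - (ν α')^2 * ζ^2 / 2)
          = Q * Real.exp (q * ξ) := by
        rw [hνα', hB'α', hQ]
        rw [show -(-q) * ξ - (-q)^2 * ζ^2 / 2 = q * ξ + -(q^2 * ζ^2 / 2) by ring,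
          Real.exp_add]
        ring
      rw [← hterm]
      apply Finset.single_le_sum (f := fun ι => β ι * B' ι *
        Real.exp (-(ν ι) * ξ - (ν ι)^2 * ζ^2 / 2)) _ hα'mem
      intro ι hι
      have h1 : 0 < B' ι := hB' ι hι
      have h2 : (1:ℝ) ≤ β ι := hβ ι hι
      positivity
    rw [hC, add_mul]
    linarith only [b1, b2, b3]
  -- f is eventually negative
  have hneg : ∀ ξ₀ : ℝ, ∃ ξ₁, ξ₀ < ξ₁ ∧ f ξ₁ < 0 := by
    intro ξ₀
    set ξ₁ : ℝ := max ξ₀ 0 + max (Real.log (C / Q) / (p + q)) 0 + 1 with hξ₁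
    refine ⟨ξ₁, ?_, ?_⟩
    · have h1 : ξ₀ ≤ max ξ₀ 0 := le_max_left _ _
      have h2 : (0:ℝ) ≤ max (Real.log (C / Q) / (p + q)) 0 := le_max_right _ _
      rw [hξ₁]; linarith
    · have hξ₁0 : 0 ≤ ξ₁ := by
        have h1 : (0:ℝ) ≤ max ξ₀ 0 := le_max_right _ _
        have h2 : (0:ℝ) ≤ max (Real.log (C / Q) / (p + q)) 0 := le_max_right _ _
        rw [hξ₁]; linarith
      have hlog : Real.log (C / Q) < (p + q) * ξ₁ := by
        have h1 : Real.log (C / Q) / (p + q) < ξ₁ := by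
          have h2 : Real.log (C / Q) / (p + q) ≤ max (Real.log (C / Q) / (p + q)) 0 :=
            le_max_left _ _
          have h3 : (0:ℝ) ≤ max ξ₀ 0 := le_max_right _ _
          rw [hξ₁]; linarith
        calc Real.log (C / Q) = (Real.log (C / Q) / (p + q)) * (p + q) := by
              field_simp
          _ < ξ₁ * (p + q) := by
              exact mul_lt_mul_of_pos_right h1 hpq
          _ = (p + q) * ξ₁ := by ring
      have hCQ : C / Q < Real.exp ((p + q) * ξ₁) :=
        (Real.log_lt_iff_lt_exp (by positivity)).1 hlog
      have hfinal : C * Real.exp (-p * ξ₁) < Q * Real.exp (q * ξ₁) := by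
        rw [div_lt_iff₀ hQpos] at hCQ
        have hexp : Real.exp ((p + q) * ξ₁) * Real.exp (-p * ξ₁) = Real.exp (q * ξ₁) := by
          rw [← Real.exp_add]; ring_nf
        calc C * Real.exp (-p * ξ₁)
            < (Real.exp ((p + q) * ξ₁) * Q) * Real.exp (-p * ξ₁) :=
              mul_lt_mul_of_pos_right hCQ (Real.exp_pos _)
          _ = Q * (Real.exp ((p + q) * ξ₁) * Real.exp (-p * ξ₁)) := by ring
          _ = Q * Real.exp (q * ξ₁) := by rw [hexp]
      have := key ξ₁ hξ₁0
      linarith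
  -- continuity of f
  have hcont : Continuous f := by
    have hfe : f = fun ξ =>
        (∑ j ∈ Finset.Icc (α+1) ω, c j * B j * Real.exp (-(ς j) * ξ - (ς j)^2 * ζ^2 / 2))
      + (∑ ι ∈ Finset.Ico (α'+1) ω', B' ι * Real.exp (-(ς' ι) * ξ - (ς' ι)^2 * ζ^2 / 2))
      - (∑ ι ∈ Finset.Ico α' ω', β ι * B' ι * Real.exp (-(ν ι) * ξ - (ν ι)^2 * ζ^2 / 2)) :=
      funext hf
    rw [hfe]
    apply Continuous.sub
    · apply Continuous.add <;>
      · apply continuous_finset_sum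
        intro i _
        fun_prop
    · apply continuous_finset_sum
      intro i _
      fun_prop
  -- first conclusion
  have main : ∀ ξ : ℝ, ξs < ξ → f ξ < 0 := by
    intro ξ hξ
    by_contra hge
    push_neg at hge
    have hfξ : 0 < f ξ := by
      rcases lt_or_eq_of_le hge with h | h
      · exact h
      · exact absurd (huniq ξ h.symm) (by linarith)
    obtain ⟨ξ₁, hξ₁gt, hξ₁neg⟩ := hneg ξ
    have hivt : (0:ℝ) ∈ f '' Set.Icc ξ ξ₁ := by
      apply intermediate_value_Icc' (le_of_lt hξ₁gt) hcont.continuousOn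
      constructor <;> linarith
    obtain ⟨z, hz, hfz⟩ := hivt
    have : z = ξs := huniq z hfz
    simp only [Set.mem_Icc] at hz
    linarith [hz.1]
  refine ⟨main, ?_⟩
  intro ξ
  by_cases hle : ξ ≤ ξs
  · rw [Set.indicator_of_mem (Set.mem_Iic.2 hle)]
    rcases lt_or_eq_of_le hle with h | h
    · exact max_eq_left (le_of_lt (hpos ξ h))
    · rw [h, hξs]; simp
  · push_neg at hle
    rw [Set.indicator_of_notMem (by simpa using not_le.2 hle)]
    exact max_eq_right (le_of_lt (main ξ hle))
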